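/- For every x ∈ ℝ^n with x ≥ 0, the maximum deviation satisfies DEV_i(x) = −c*_i(x), where c*_i(x) is the minimum cost of a feasible integral flow of value n in the instance (G,c)^i_x (and such a minimum-cost flow exists). -/

import Mathlib

open Finset

/-!
A feasible flow of value `n` is the same thing as an assignment in `Y_i` that places every
coefficient `j` in exactly one band, and its cost is minus the deviation of that assignment.
Conversely, any `y ∈ Y_i` can be completed to such an assignment by putting the unassigned
coefficients into band `0`: this respects `u_0 = n` and does not change the deviation since
`d^0_{ij} = 0`. Hence the flow costs are exactly the negated deviations, and the maximum deviation
exists because `Y_i` induces only finitely many deviation values and is nonempty (assign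
consecutive blocks of `l_k` coefficients to the bands `k`).
-/

/-- The band index set `K = {K⁻, …, -1, 0, 1, …, K⁺}`. -/
noncomputable def bands (Km Kp : ℤ) : Finset ℤ := Finset.Icc Km Kp

/-- `Y_i`: the set of feasible 0-1 deviation assignments. -/
def memY (n : ℕ) (Km Kp : ℤ) (l u : ℤ → ℕ) (y : Fin n → ℤ → ℕ) : Prop :=
  (∀ j : Fin n, ∀ k ∈ bands Km Kp, y j k ≤ 1) ∧
  (∀ k ∈ bands Km Kp, l k ≤ ∑ j : Fin n, y j k ∧ ∑ j : Fin n, y j k ≤ u k) ∧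
  (∀ j : Fin n, ∑ k ∈ bands Km Kp, y j k ≤ 1)

/-- `Ȳ_i`: feasible deviation assignments distributing all `n` coefficients among the bands. -/
def memYbar (n : ℕ) (Km Kp : ℤ) (l u : ℤ → ℕ) (y : Fin n → ℤ → ℕ) : Prop :=
  memY n Km Kp l u y ∧ ∑ j : Fin n, ∑ k ∈ bands Km Kp, y j k = n

/-- A feasible integral flow of value `n` in the min-cost flow instance `(G,c)ⁱₓ`:
`fs j` is the flow on arc `(s, v_j)` (bounds `[0,1]`), `fm j k` is the flow on arc
`(v_j, w_k)` (bounds `[0,1]`), and `ft k` is the flow on arc `(w_k, t)` (bounds `[l_k, u_k]`);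
flow conservation holds at every vertex `v_j` and `w_k`, and the flow value is `n`. -/
def IsFlow (n : ℕ) (Km Kp : ℤ) (l u : ℤ → ℕ)
    (fs : Fin n → ℕ) (fm : Fin n → ℤ → ℕ) (ft : ℤ → ℕ) : Prop :=
  (∀ j : Fin n, fs j ≤ 1) ∧
  (∀ j : Fin n, ∀ k ∈ bands Km Kp, fm j k ≤ 1) ∧
  (∀ k ∈ bands Km Kp, l k ≤ ft k ∧ ft k ≤ u k) ∧
  (∀ j : Fin n, fs j = ∑ k ∈ bands Km Kp, fm j k) ∧
  (∀ k ∈ bands Km Kp, ∑ j : Fin n, fm j k = ft k) ∧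
  (∑ j : Fin n, fs j = n)

/-- The cost `c(f) = ∑_j ∑_k (-d^k_{ij} x_j) f(v_j, w_k)` of a flow (only the middle arcs
have nonzero cost). -/
noncomputable def flowCost (n : ℕ) (Km Kp : ℤ) (d : Fin n → ℤ → ℝ) (x : Fin n → ℝ)
    (fm : Fin n → ℤ → ℕ) : ℝ :=
  ∑ j : Fin n, ∑ k ∈ bands Km Kp, -(d j k * x j) * (fm j k : ℝ)

variable {n : ℕ} {Km Kp : ℤ} {l u : ℤ → ℕ}

noncomputable def deviation (Km Kp : ℤ) (d : Fin n → ℤ → ℝ) (x : Fin n → ℝ)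
    (y : Fin n → ℤ → ℕ) : ℝ :=
  ∑ j : Fin n, ∑ k ∈ bands Km Kp, d j k * x j * (y j k : ℝ)

lemma finite_deviation_memY (d : Fin n → ℤ → ℝ) (x : Fin n → ℝ) :
    {v : ℝ | ∃ y, memY n Km Kp l u y ∧ v = deviation Km Kp d x y}.Finite := by
  refine (Set.finite_range fun z : Fin n → bands Km Kp → Fin 2 =>
    ∑ j, ∑ k : bands Km Kp, d j k * x j * ((z j k : ℕ) : ℝ)).subset ?_
  rintro v ⟨y, hy, rfl⟩
  exact ⟨fun j k => ⟨y j k, Nat.lt_succ_of_le (hy.1 j k k.2)⟩,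
    sum_congr rfl fun j _ => sum_coe_sort (bands Km Kp) fun k => d j k * x j * (y j k : ℝ)⟩

noncomputable def blockStart (Km : ℤ) (l : ℤ → ℕ) (k : ℤ) : ℕ := ∑ k' ∈ Ico Km k, l k'

lemma blockStart_add_eq {k : ℤ} (hk : Km ≤ k) :
    blockStart Km l k + l k = ∑ k' ∈ Icc Km k, l k' := by
  rw [← Ico_insert_right hk, sum_insert right_notMem_Ico, add_comm, blockStart]

lemma blockStart_add_le_of_lt {k k' : ℤ} (hk : Km ≤ k) (hkk' : k < k') :
    blockStart Km l k + l k ≤ blockStart Km l k' := by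
  rw [blockStart_add_eq hk]
  exact sum_le_sum_of_subset (Icc_subset_Ico_right hkk')

lemma blockStart_add_le_sum_bands {k : ℤ} (hk : k ∈ bands Km Kp) :
    blockStart Km l k + l k ≤ ∑ k' ∈ bands Km Kp, l k' := by
  rw [bands, mem_Icc] at hk
  rw [blockStart_add_eq hk.1]
  exact sum_le_sum_of_subset (Icc_subset_Icc_right hk.2)

noncomputable def blockAssignment (Km : ℤ) (l : ℤ → ℕ) (j : Fin n) (k : ℤ) : ℕ :=
  if (j : ℕ) ∈ Ico (blockStart Km l k) (blockStart Km l k + l k) then 1 else 0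

lemma sum_fin_indicator_Ico {a b : ℕ} (h : b ≤ n) :
    ∑ j : Fin n, (if (j : ℕ) ∈ Ico a b then 1 else 0) = b - a := by
  rw [Fin.sum_univ_eq_sum_range (fun m => if m ∈ Ico a b then 1 else 0), sum_boole,
    filter_mem_eq_inter, range_eq_Ico, inter_eq_right.mpr (Ico_subset_Ico (Nat.zero_le a) h)]
  simp

lemma memY_blockAssignment (hlu : ∀ k ∈ bands Km Kp, l k ≤ u k)
    (hl : ∑ k ∈ bands Km Kp, l k ≤ n) : memY n Km Kp l u (blockAssignment Km l) := by
  refine ⟨fun j k _ => ite_le_one le_rfl zero_le_one, fun k hk => ?_, fun j => ?_⟩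
  · have hcol : ∑ j : Fin n, blockAssignment Km l j k = l k := by
      simp only [blockAssignment]
      rw [sum_fin_indicator_Ico ((blockStart_add_le_sum_bands hk).trans hl),
        Nat.add_sub_cancel_left]
    exact ⟨hcol.ge, hcol ▸ hlu k hk⟩
  · simp only [blockAssignment, sum_boole, Nat.cast_id]
    refine card_le_one.mpr fun a ha b hb => ?_
    simp only [mem_filter, mem_Ico] at ha hb
    have hKa := (mem_Icc.mp ha.1).1
    have hKb := (mem_Icc.mp hb.1).1
    by_contra hab
    rcases lt_or_gt_of_ne hab with h | h
    · have := blockStart_add_le_of_lt (l := l) hKa h; omega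
    · have := blockStart_add_le_of_lt (l := l) hKb h; omega

section padding

-- The truncated `1 - ∑ …` is `1` exactly on the empty rows when the row sums are at most `1`.
noncomputable def padToBandZero (Km Kp : ℤ) (y : Fin n → ℤ → ℕ) (j : Fin n) (k : ℤ) : ℕ :=
  y j k + if k = 0 then 1 - ∑ k' ∈ bands Km Kp, y j k' else 0

variable {y : Fin n → ℤ → ℕ}

lemma sum_padToBandZero (h0 : (0 : ℤ) ∈ bands Km Kp) (hy : memY n Km Kp l u y) (j : Fin n) :
    ∑ k ∈ bands Km Kp, padToBandZero Km Kp y j k = 1 := by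
  have := hy.2.2 j
  simp only [padToBandZero, sum_add_distrib, sum_ite_eq', if_pos h0]
  omega

lemma memY_padToBandZero (h0 : (0 : ℤ) ∈ bands Km Kp) (hu0 : u 0 = n)
    (hy : memY n Km Kp l u y) : memY n Km Kp l u (padToBandZero Km Kp y) := by
  have hrow := sum_padToBandZero h0 hy
  refine ⟨fun j k hk => hrow j ▸ single_le_sum (fun _ _ => Nat.zero_le _) hk,
    fun k hk => ⟨(hy.2.1 k hk).1.trans (sum_le_sum fun j _ => Nat.le_add_right _ _), ?_⟩,
    fun j => (hrow j).le⟩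
  by_cases hk0 : k = 0
  · subst hk0
    calc ∑ j, padToBandZero Km Kp y j 0 ≤ ∑ _j : Fin n, 1 :=
          sum_le_sum fun j _ => hrow j ▸ single_le_sum (fun _ _ => Nat.zero_le _) h0
      _ = u 0 := by simp [hu0]
  · simpa [padToBandZero, hk0] using (hy.2.1 k hk).2

lemma deviation_padToBandZero {d : Fin n → ℤ → ℝ} (hd0 : ∀ j, d j 0 = 0) (x : Fin n → ℝ) :
    deviation Km Kp d x (padToBandZero Km Kp y) = deviation Km Kp d x y := by
  refine sum_congr rfl fun j _ => sum_congr rfl fun k _ => ?_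
  by_cases hk0 : k = 0
  · simp [hk0, hd0]
  · simp [padToBandZero, hk0]

end padding

lemma IsFlow.memY {fs : Fin n → ℕ} {fm : Fin n → ℤ → ℕ} {ft : ℤ → ℕ}
    (hf : IsFlow n Km Kp l u fs fm ft) : memY n Km Kp l u fm := by
  obtain ⟨hs, hm, ht, hv, hw, -⟩ := hf
  exact ⟨hm, fun k hk => hw k hk ▸ ht k hk, fun j => hv j ▸ hs j⟩

lemma isFlow_of_sum_eq_one {y : Fin n → ℤ → ℕ} (hy : memY n Km Kp l u y)
    (hrow : ∀ j, ∑ k ∈ bands Km Kp, y j k = 1) :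
    IsFlow n Km Kp l u (fun _ => 1) y (fun k => ∑ j, y j k) :=
  ⟨fun _ => le_rfl, hy.1, hy.2.1, fun j => (hrow j).symm, fun _ _ => rfl, by simp⟩

lemma flowCost_eq_neg_deviation (d : Fin n → ℤ → ℝ) (x : Fin n → ℝ) (fm : Fin n → ℤ → ℕ) :
    flowCost n Km Kp d x fm = -deviation Km Kp d x fm := by
  simp only [flowCost, deviation, neg_mul, sum_neg_distrib]

theorem stmt_11_general (n : ℕ) (Km Kp : ℤ) (hKm : Km < 0) (hKp : 0 < Kp)
    (d : Fin n → ℤ → ℝ) (hd0 : ∀ j : Fin n, d j 0 = 0)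
    (l u : ℤ → ℕ)
    (hlu : ∀ k ∈ bands Km Kp, l k ≤ u k)
    (hu0 : u 0 = n)
    (hl : ∑ k ∈ bands Km Kp, l k ≤ n)
    (x : Fin n → ℝ) :
    ∃ D cstar : ℝ,
      IsGreatest {v : ℝ | ∃ y : Fin n → ℤ → ℕ, memY n Km Kp l u y ∧
        v = ∑ j : Fin n, ∑ k ∈ bands Km Kp, d j k * x j * (y j k : ℝ)} D ∧
      IsLeast {c : ℝ | ∃ (fs : Fin n → ℕ) (fm : Fin n → ℤ → ℕ) (ft : ℤ → ℕ),
        IsFlow n Km Kp l u fs fm ft ∧ c = flowCost n Km Kp d x fm} cstar ∧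
      D = -cstar := by
  have h0 : (0 : ℤ) ∈ bands Km Kp := mem_Icc.mpr ⟨hKm.le, hKp.le⟩
  set S := {v : ℝ | ∃ y, memY n Km Kp l u y ∧ v = deviation Km Kp d x y}
  have hS : IsGreatest S (sSup S) := (finite_deviation_memY d x).isCompact.isGreatest_sSup
    ⟨_, _, memY_blockAssignment hlu hl, rfl⟩
  refine ⟨sSup S, -sSup S, hS, ⟨?_, ?_⟩, (neg_neg _).symm⟩
  · obtain ⟨y, hy, hD⟩ := hS.1
    refine ⟨_, _, _, isFlow_of_sum_eq_one (memY_padToBandZero h0 hu0 hy)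
      (sum_padToBandZero h0 hy), ?_⟩
    rw [flowCost_eq_neg_deviation, deviation_padToBandZero hd0, hD]
  · rintro c ⟨fs, fm, ft, hf, rfl⟩
    rw [flowCost_eq_neg_deviation, neg_le_neg_iff]
    exact hS.2 ⟨fm, hf.memY, rfl⟩

/-- for every `x ≥ 0`, the maximum deviation `DEV_i(x)` (attained over `Y_i`)
equals `-c*_i(x)`, where `c*_i(x)` is the minimum cost of a feasible integral flow of value
`n` in `(G,c)ⁱₓ` (and a minimum-cost flow exists). -/
theorem stmt_11 (n : ℕ) (hn : 0 < n) (Km Kp : ℤ) (hKm : Km < 0) (hKp : 0 < Kp)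
    (d : Fin n → ℤ → ℝ) (hd0 : ∀ j : Fin n, d j 0 = 0)
    (l u : ℤ → ℕ)
    (hlu : ∀ k ∈ bands Km Kp, l k ≤ u k)
    (hun : ∀ k ∈ bands Km Kp, u k ≤ n)
    (hu0 : u 0 = n)
    (hl : ∑ k ∈ bands Km Kp, l k ≤ n)
    (x : Fin n → ℝ) (hx : ∀ j, 0 ≤ x j) :
    ∃ D cstar : ℝ,
      IsGreatest {v : ℝ | ∃ y : Fin n → ℤ → ℕ, memY n Km Kp l u y ∧
        v = ∑ j : Fin n, ∑ k ∈ bands Km Kp, d j k * x j * (y j k : ℝ)} D ∧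
      IsLeast {c : ℝ | ∃ (fs : Fin n → ℕ) (fm : Fin n → ℤ → ℕ) (ft : ℤ → ℕ),
        IsFlow n Km Kp l u fs fm ft ∧ c = flowCost n Km Kp d x fm} cstar ∧
      D = -cstar :=
  stmt_11_general n Km Kp hKm hKp d hd0 l u hlu hu0 hl x
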